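/- Determinant similarity ratio of the noiseless GROUSE update for an arbitrary step: Let 0 < d < n, let Ū and U_t be n×d matrices with orthonormal columns with det(Ūᵀ U_t) ≠ 0, and let the observation be x = v = Ū s for some s ∈ ℝ^d. Write v_∥ = U_t U_tᵀ v and v_⊥ = v − v_∥, and assume v_∥ ≠ 0 and v_⊥ ≠ 0. For any angle θ, apply the GROUSE update U_{t+1} = U_t + (cos(θ) v_∥/‖v_∥‖ + sin(θ) v_⊥/‖v_⊥‖ − v_∥/‖v_∥‖) wᵀ/‖w‖ with w = U_tᵀ v. Then ζ_{t+1}/ζ_t = (cos θ + (‖v_⊥‖/‖v_∥‖) sin θ)², where ζ_t := det(Ūᵀ U_t U_tᵀ Ū). -/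

import Mathlib

open Matrix

/-! `ζ(Ū, U) = det(ŪᵀU)²`, and the GROUSE step is a rank-one update
`U⁺ = U + f rᵀ` with `r = w/‖w‖`, so the matrix determinant lemma gives
`det(ŪᵀU⁺) = det(ŪᵀU) (1 + rᵀ (ŪᵀU)⁻¹ Ūᵀ f)`. Since `v = Ū s` and `w = Uᵀ v = (ŪᵀU)ᵀ s`,
`wᵀ (ŪᵀU)⁻¹ Ūᵀ = vᵀ`, so the correction factor is `1 + v·f / ‖w‖`. Finally `‖w‖ = ‖v_∥‖`,
`v·v_∥ = ‖v_∥‖²` and `v·v_⊥ = ‖v_⊥‖²` turn it into `cos θ + (‖v_⊥‖/‖v_∥‖) sin θ`. -/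

noncomputable def vnorm {m : Type*} [Fintype m] (x : m → ℝ) : ℝ :=
  Real.sqrt (∑ i, x i ^ 2)

/-- `U` has orthonormal columns. -/
def OrthonormalCols {n d : ℕ} (U : Matrix (Fin n) (Fin d) ℝ) : Prop :=
  Uᵀ * U = 1

/-- Determinant similarity `ζ = det(Ūᵀ U Uᵀ Ū)`. -/
noncomputable def zetaSim {n d : ℕ} (Ub U : Matrix (Fin n) (Fin d) ℝ) : ℝ :=
  (Ubᵀ * U * Uᵀ * Ub).det

lemma div_mul_sq_eq_mul {K : Type*} [Field K] (a b : K) : a / b * b ^ 2 = a * b := by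
  rcases eq_or_ne b 0 with rfl | hb
  · simp
  · field_simp

lemma real_dotProduct_self_nonneg {m : Type*} [Fintype m] (x : m → ℝ) : 0 ≤ x ⬝ᵥ x :=
  Finset.sum_nonneg fun i _ => mul_self_nonneg (x i)

lemma vnorm_eq_sqrt_dotProduct {m : Type*} [Fintype m] (x : m → ℝ) : vnorm x = √(x ⬝ᵥ x) := by
  simp only [vnorm, dotProduct, sq]

lemma vnorm_sq {m : Type*} [Fintype m] (x : m → ℝ) : vnorm x ^ 2 = x ⬝ᵥ x := by
  rw [vnorm_eq_sqrt_dotProduct, Real.sq_sqrt (real_dotProduct_self_nonneg x)]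

lemma vnorm_pos {m : Type*} [Fintype m] {x : m → ℝ} (hx : x ≠ 0) : 0 < vnorm x := by
  rw [vnorm_eq_sqrt_dotProduct, Real.sqrt_pos]
  exact (real_dotProduct_self_nonneg x).lt_of_ne'
    (dotProduct_self_eq_zero.not.mpr hx)

theorem zetaSim_eq_det_sq {n d : ℕ} (Ub U : Matrix (Fin n) (Fin d) ℝ) :
    zetaSim Ub U = (Ubᵀ * U).det ^ 2 := by
  rw [zetaSim, Matrix.mul_assoc, ← transpose_transpose Ub, ← transpose_mul, transpose_transpose,
    det_mul, det_transpose, sq]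

namespace Matrix

variable {k R : Type*} [CommRing R] [Fintype k] [DecidableEq k]

theorem det_add_vecMulVec {A : Matrix k k R} (hA : IsUnit A.det) (u v : k → R) :
    (A + vecMulVec u v).det = A.det * (1 + v ⬝ᵥ (A⁻¹ *ᵥ u)) := by
  rw [vecMulVec_eq (ι := Unit), det_add_replicateCol_mul_replicateRow hA, Matrix.mul_assoc,
    ← replicateCol_mulVec, det_unique (n := Unit)]
  simp

theorem transpose_mulVec_dotProduct_inv_mulVec {A : Matrix k k R} (hA : IsUnit A.det)
    (x y : k → R) : (Aᵀ *ᵥ x) ⬝ᵥ (A⁻¹ *ᵥ y) = x ⬝ᵥ y := by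
  rw [mulVec_transpose, ← dotProduct_mulVec, mulVec_mulVec, mul_nonsing_inv A hA, one_mulVec]

theorem mulVec_dotProduct_inv_mulVec_mulVec {m : Type*} [Fintype m] {B C : Matrix m k R}
    (h : IsUnit (Bᵀ * C).det) (s : k → R) (y : m → R) :
    (Cᵀ *ᵥ (B *ᵥ s)) ⬝ᵥ ((Bᵀ * C)⁻¹ *ᵥ (Bᵀ *ᵥ y)) = (B *ᵥ s) ⬝ᵥ y := by
  rw [mulVec_mulVec, ← transpose_transpose B, ← transpose_mul, transpose_transpose,
    transpose_mulVec_dotProduct_inv_mulVec h, dotProduct_mulVec, vecMul_transpose,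
    transpose_transpose]

end Matrix

namespace OrthonormalCols

variable {n d : ℕ} {U : Matrix (Fin n) (Fin d) ℝ}

theorem dotProduct_mulVec_mulVec (hU : OrthonormalCols U) (x y : Fin d → ℝ) :
    (U *ᵥ x) ⬝ᵥ (U *ᵥ y) = x ⬝ᵥ y := by
  rw [dotProduct_mulVec, ← mulVec_transpose, mulVec_mulVec, hU, one_mulVec]

theorem vnorm_mulVec (hU : OrthonormalCols U) (x : Fin d → ℝ) : vnorm (U *ᵥ x) = vnorm x := by
  rw [vnorm_eq_sqrt_dotProduct, vnorm_eq_sqrt_dotProduct, hU.dotProduct_mulVec_mulVec]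

theorem dotProduct_proj (hU : OrthonormalCols U) (v : Fin n → ℝ) :
    v ⬝ᵥ (U *ᵥ (Uᵀ *ᵥ v)) = vnorm (U *ᵥ (Uᵀ *ᵥ v)) ^ 2 := by
  rw [vnorm_sq, hU.dotProduct_mulVec_mulVec, dotProduct_mulVec, ← mulVec_transpose]

theorem dotProduct_sub_proj (hU : OrthonormalCols U) (v : Fin n → ℝ) :
    v ⬝ᵥ (v - U *ᵥ (Uᵀ *ᵥ v)) = vnorm (v - U *ᵥ (Uᵀ *ᵥ v)) ^ 2 := by
  have hproj := hU.dotProduct_proj v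
  rw [vnorm_sq] at hproj ⊢
  rw [sub_dotProduct, dotProduct_sub, dotProduct_sub, ← hproj, dotProduct_comm (U *ᵥ _) v]
  ring

end OrthonormalCols

theorem zeta_ratio_arbitrary_step_general {n d : ℕ}
    (Ub U : Matrix (Fin n) (Fin d) ℝ)
    (hU : OrthonormalCols U)
    (hdet : (Ubᵀ * U).det ≠ 0)
    (s : Fin d → ℝ) (v : Fin n → ℝ) (hv : v = Ub *ᵥ s)
    (vpar vperp : Fin n → ℝ) (w : Fin d → ℝ)
    (hvpar : vpar = U *ᵥ (Uᵀ *ᵥ v)) (hvperp : vperp = v - vpar) (hw : w = Uᵀ *ᵥ v)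
    (hpar : vpar ≠ 0)
    (θ : ℝ) (Unext : Matrix (Fin n) (Fin d) ℝ)
    (hUnext : Unext = U + Matrix.of (fun i j =>
      ((Real.cos θ * (vpar i / vnorm vpar) + Real.sin θ * (vperp i / vnorm vperp))
          - vpar i / vnorm vpar) * (w j / vnorm w))) :
    zetaSim Ub Unext / zetaSim Ub U
      = (Real.cos θ + (vnorm vperp / vnorm vpar) * Real.sin θ) ^ 2 := by
  set f := ((Real.cos θ - 1) / vnorm vpar) • vpar + (Real.sin θ / vnorm vperp) • vperp
  have hp : vnorm vpar ≠ 0 := (vnorm_pos hpar).ne'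
  have hwp : vnorm w = vnorm vpar := by rw [hvpar, ← hw, hU.vnorm_mulVec]
  have hUnext' : Ubᵀ * Unext = Ubᵀ * U + vecMulVec (Ubᵀ *ᵥ f) ((vnorm vpar)⁻¹ • w) := by
    rw [← mul_vecMulVec, ← Matrix.mul_add, hUnext, hwp]
    congr 2
    ext i j
    simp only [f, of_apply, vecMulVec_apply, Pi.add_apply, Pi.smul_apply, smul_eq_mul]
    ring
  have hvf : v ⬝ᵥ f = (Real.cos θ - 1) * vnorm vpar + Real.sin θ * vnorm vperp := by
    have hvpar_sq : v ⬝ᵥ vpar = vnorm vpar ^ 2 := hvpar ▸ hU.dotProduct_proj v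
    have hvperp_sq : v ⬝ᵥ vperp = vnorm vperp ^ 2 := by
      rw [hvperp, hvpar]; exact hU.dotProduct_sub_proj v
    rw [dotProduct_add, dotProduct_smul, dotProduct_smul, hvpar_sq, hvperp_sq]
    rw [smul_eq_mul, smul_eq_mul, div_mul_sq_eq_mul, div_mul_sq_eq_mul]
  have hA : IsUnit (Ubᵀ * U).det := hdet.isUnit
  have hfactor : 1 + ((vnorm vpar)⁻¹ • w) ⬝ᵥ ((Ubᵀ * U)⁻¹ *ᵥ (Ubᵀ *ᵥ f))
      = Real.cos θ + (vnorm vperp / vnorm vpar) * Real.sin θ := by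
    rw [smul_dotProduct, hw, hv, mulVec_dotProduct_inv_mulVec_mulVec hA, ← hv, hvf, smul_eq_mul]
    field_simp
    ring
  rw [zetaSim_eq_det_sq, zetaSim_eq_det_sq, hUnext', det_add_vecMulVec hA, hfactor, mul_pow,
    mul_div_cancel_left₀ _ (pow_ne_zero 2 hdet)]

/-- **Determinant similarity ratio of the noiseless GROUSE update for an arbitrary step.**
With observation `v = Ū s`, projection `v_∥ = U Uᵀ v ≠ 0`, residual `v_⊥ = v − v_∥ ≠ 0`,
`w = Uᵀ v`, and update
`U⁺ = U + (cos θ · v_∥/‖v_∥‖ + sin θ · v_⊥/‖v_⊥‖ − v_∥/‖v_∥‖) wᵀ/‖w‖`, we have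
`ζ_{t+1}/ζ_t = (cos θ + (‖v_⊥‖/‖v_∥‖) sin θ)²`. -/
theorem zeta_ratio_arbitrary_step {n d : ℕ} (hd : 0 < d) (hdn : d < n)
    (Ub U : Matrix (Fin n) (Fin d) ℝ)
    (hUb : OrthonormalCols Ub) (hU : OrthonormalCols U)
    (hdet : (Ubᵀ * U).det ≠ 0)
    (s : Fin d → ℝ) (v : Fin n → ℝ) (hv : v = Ub *ᵥ s)
    (vpar vperp : Fin n → ℝ) (w : Fin d → ℝ)
    (hvpar : vpar = U *ᵥ (Uᵀ *ᵥ v)) (hvperp : vperp = v - vpar) (hw : w = Uᵀ *ᵥ v)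
    (hpar : vpar ≠ 0) (hperp : vperp ≠ 0)
    (θ : ℝ) (Unext : Matrix (Fin n) (Fin d) ℝ)
    (hUnext : Unext = U + Matrix.of (fun i j =>
      ((Real.cos θ * (vpar i / vnorm vpar) + Real.sin θ * (vperp i / vnorm vperp))
          - vpar i / vnorm vpar) * (w j / vnorm w))) :
    zetaSim Ub Unext / zetaSim Ub U
      = (Real.cos θ + (vnorm vperp / vnorm vpar) * Real.sin θ) ^ 2 :=
  zeta_ratio_arbitrary_step_general Ub U hU hdet s v hv vpar vperp w hvpar hvperp hw hpar θ Unext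
    hUnext
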